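/- arXiv:1308.0948 — 5 statements merged into one kernel-verified Lean document; each statement's English description precedes it below -/
import Mathlib

section
/- Let ℌ be a quotient-closed Fitting class and 𝔉 a formation, and let N be a normal subgroup of a finite group G. Then N_{ℌ,𝔉}(G)N/N ≤ N_{ℌ,𝔉}(G/N), where N_{ℌ,𝔉}(G) = ⋂_{H ≤ G} N_G(H^𝔉 G_ℌ). -/
universe u

/-- A class of groups (in universe `u`). -/
def GroupClass : Type (u + 1) := ∀ (G : Type u) [Group G], Prop

/-- Closed under homomorphic images (quotients). -/
def GroupClass.QClosed (F : GroupClass.{u}) : Prop :=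
  ∀ (G : Type u) [Group G] (H : Type u) [Group H] (f : G →* H),
    Function.Surjective f → F G → F H

/-- Closed under subdirect products: if `G/N₁ ∈ F` and `G/N₂ ∈ F` then `G/(N₁ ⊓ N₂) ∈ F`. -/
def GroupClass.SubdirClosed (F : GroupClass.{u}) : Prop :=
  ∀ (G : Type u) [Group G] (N₁ N₂ : Subgroup G) (h₁ : N₁.Normal) (h₂ : N₂.Normal),
    (letI := h₁; F (G ⧸ N₁)) → (letI := h₂; F (G ⧸ N₂)) →
    (letI : (N₁ ⊓ N₂).Normal :=
      { conj_mem := fun x hx g => ⟨h₁.conj_mem x hx.1 g, h₂.conj_mem x hx.2 g⟩ };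
      F (G ⧸ (N₁ ⊓ N₂)))

/-- Closed under taking subgroups. -/
def GroupClass.SClosed (F : GroupClass.{u}) : Prop :=
  ∀ (G : Type u) [Group G] (H : Subgroup G), F G → F ↥H

/-- Closed under taking normal subgroups. -/
def GroupClass.NClosed (F : GroupClass.{u}) : Prop :=
  ∀ (G : Type u) [Group G] (N : Subgroup G), N.Normal → F G → F ↥N

/-- Closed under products of normal subgroups. -/
def GroupClass.NProdClosed (F : GroupClass.{u}) : Prop :=
  ∀ (G : Type u) [Group G] (N₁ N₂ : Subgroup G), N₁.Normal → N₂.Normal →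
    F ↥N₁ → F ↥N₂ → F ↥(N₁ ⊔ N₂)

/-- Closed under extensions. -/
def GroupClass.ExtClosed (F : GroupClass.{u}) : Prop :=
  ∀ (G : Type u) [Group G] (N : Subgroup G) (hN : N.Normal),
    F ↥N → (letI := hN; F (G ⧸ N)) → F G

/-- `R` is the `F`-residual of `G`: the smallest normal subgroup with quotient in `F`. -/
def IsResidual (F : GroupClass.{u}) (G : Type u) [Group G] (R : Subgroup G) : Prop :=
  ∃ hR : R.Normal, (letI := hR; F (G ⧸ R)) ∧
    ∀ (N : Subgroup G) (hN : N.Normal), (letI := hN; F (G ⧸ N)) → R ≤ N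

/-- `R` is the `H`-radical of `G`: the largest normal subgroup belonging to `H`. -/
def IsHRadical (H : GroupClass.{u}) (G : Type u) [Group G] (R : Subgroup G) : Prop :=
  R.Normal ∧ H ↥R ∧ ∀ N : Subgroup G, N.Normal → H ↥N → N ≤ R

/-- The `ℌ`-`𝔉`-norm of `G` (given a residual function `res` and a radical function `rad`):
the intersection over all subgroups `K ≤ G` of the normalizers of `K^𝔉 G_ℌ`. -/
noncomputable def HFnorm (res rad : ∀ (A : Type u) [Group A], Subgroup A)
    (G : Type u) [Group G] : Subgroup G :=
  ⨅ K : Subgroup G, Subgroup.normalizer ((Subgroup.map K.subtype (res ↥K) ⊔ rad G : Subgroup G) : Set G)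

/-- `G` is a `π`-group: every prime dividing its order lies in `π`. -/
def IsPiGroup (π : Set ℕ) (G : Type u) [Group G] : Prop :=
  ∀ p : ℕ, p.Prime → p ∣ Nat.card G → p ∈ π

/-- The subgroup `O_π(G)`, generated by all normal `π`-subgroups of `G`. -/
noncomputable def Opi (π : Set ℕ) (G : Type u) [Group G] : Subgroup G :=
  ⨆ (N : Subgroup G) (_ : N.Normal) (_ : IsPiGroup π ↥N), N

/-- `G` is `π`-solvable: it has a finite normal series whose factors are
`π'`-groups or solvable `π`-groups. -/
def IsPiSolvable (π : Set ℕ) (G : Type u) [Group G] : Prop :=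
  ∃ (n : ℕ) (c : Fin (n + 1) → Subgroup G),
    c 0 = ⊥ ∧ c (Fin.last n) = ⊤ ∧
    ∀ i : Fin n, (c i.castSucc) ≤ (c i.succ) ∧
      ((c i.castSucc).subgroupOf (c i.succ)).Normal ∧
      ∀ h : ((c i.castSucc).subgroupOf (c i.succ)).Normal,
        (letI := h;
          IsPiGroup {p | p ∉ π} (↥(c i.succ) ⧸ (c i.castSucc).subgroupOf (c i.succ)) ∨
          (IsPiGroup π (↥(c i.succ) ⧸ (c i.castSucc).subgroupOf (c i.succ)) ∧
            IsSolvable (↥(c i.succ) ⧸ (c i.castSucc).subgroupOf (c i.succ))))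

/-- `G` is `π`-nilpotent: it has a normal `π'`-subgroup with nilpotent quotient
(equivalently `G/O_{π'}(G)` is nilpotent). -/
def IsPiNilpotent (π : Set ℕ) (G : Type u) [Group G] : Prop :=
  ∃ (N : Subgroup G) (hN : N.Normal), IsPiGroup {p | p ∉ π} ↥N ∧
    (letI := hN; Group.IsNilpotent (G ⧸ N))

/-- `G` is `S`-critical for the class `F`. -/
def CritS (F : GroupClass.{u}) (G : Type u) [Group G] : Prop :=
  ¬ F G ∧ ∀ K : Subgroup G, K ≠ ⊤ → F ↥K

/-- The ascending norm series associated with a "norm" functor `n`: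
`N⁰ = 1` and `Nⁱ(G)` is the preimage in `G` of `n(G/Nⁱ⁻¹(G))`. -/
inductive NormChain (n : ∀ (A : Type u) [Group A], Subgroup A)
    (G : Type u) [Group G] : Subgroup G → Prop
  | base : NormChain n G ⊥
  | step (M : Subgroup G) (hM : M.Normal) : NormChain n G M →
      NormChain n G (letI := hM; Subgroup.comap (QuotientGroup.mk' M) (n (G ⧸ M)))

/-- `S` is the terminal term `N^∞(G)` of the ascending norm series of `G`. -/
def IsNormTerminal (n : ∀ (A : Type u) [Group A], Subgroup A)
    (G : Type u) [Group G] (S : Subgroup G) : Prop :=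
  NormChain n G S ∧ ∃ hS : S.Normal, (letI := hS; n (G ⧸ S) = ⊥)

/-- `L/K` is a chief factor of `G`. -/
def IsChiefFactor (G : Type u) [Group G] (K L : Subgroup G) : Prop :=
  K.Normal ∧ L.Normal ∧ K < L ∧
    ∀ M : Subgroup G, M.Normal → K ≤ M → M ≤ L → M = K ∨ M = L

/-- The chief factor `L/K` is `X`-central in `G`:
`(L/K) ⋊ (G/C_G(L/K)) ∈ X`, where `G/C_G(L/K)` acts on `L/K` by conjugation. -/
def IsXCentral (X : GroupClass.{u}) (G : Type u) [Group G] (K L : Subgroup G)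
    (hK : K.Normal) (hL : L.Normal) (_ : K ≤ L) : Prop :=
  ∃ (C : Subgroup G) (hC : C.Normal),
    (∀ g : G, g ∈ C ↔ ∀ x ∈ L, g * x * g⁻¹ * x⁻¹ ∈ K) ∧
    (letI := hC; letI := hK.subgroupOf L;
      ∃ φ : (G ⧸ C) →* MulAut (↥L ⧸ K.subgroupOf L),
        (∀ (g : G) (x : ↥L), φ (QuotientGroup.mk g) (QuotientGroup.mk x) =
          QuotientGroup.mk ⟨g * ↑x * g⁻¹, hL.conj_mem ↑x x.2 g⟩) ∧
        X (SemidirectProduct (↥L ⧸ K.subgroupOf L) (G ⧸ C) φ))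

/-- A normal subgroup `N` of `G` is `πX`-hypercentral: every `G`-chief factor below `N`
of order divisible by some prime in `π` is `X`-central in `G`. -/
def PiHypercentral (π : Set ℕ) (X : GroupClass.{u}) (G : Type u) [Group G]
    (N : Subgroup G) : Prop :=
  N.Normal ∧ ∀ K L : Subgroup G, ∀ hcf : IsChiefFactor G K L, L ≤ N →
    (∃ p ∈ π, p.Prime ∧ p ∣ Nat.card (↥L ⧸ K.subgroupOf L)) →
    IsXCentral X G K L hcf.1 hcf.2.1 hcf.2.2.1.le

/-- The `πX`-hypercentre of `G`: the product of all `πX`-hypercentral normal subgroups. -/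
noncomputable def piHypercentre (π : Set ℕ) (X : GroupClass.{u})
    (G : Type u) [Group G] : Subgroup G :=
  sSup {N : Subgroup G | PiHypercentral π X G N}

/-- A group is quaternion-free if it has no section isomorphic to `Q₈`. -/
def QuaternionFree (X : Type u) [Group X] : Prop :=
  ∀ (H : Subgroup X) (K : Subgroup ↥H) (hK : K.Normal),
    (letI := hK; ¬ Nonempty ((↥H ⧸ K) ≃* QuaternionGroup 2))

open Classical in
/-- `Ψ_p(X)`: generated by the elements of order `p` (for odd `p`); for `p = 2`, by the
elements of order `2` if the Sylow `2`-subgroups are quaternion-free, and by the elements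
of order `2` or `4` otherwise. -/
noncomputable def Psi (p : ℕ) (X : Type u) [Group X] : Subgroup X :=
  if p = 2 ∧ ¬ (∀ P : Sylow 2 X, QuaternionFree ↥(P : Subgroup X)) then
    Subgroup.closure {x : X | orderOf x = 2 ∨ orderOf x = 4}
  else Subgroup.closure {x : X | orderOf x = p}

/-- The `π'𝔉`-norm of `G`: the intersection over all subgroups `K ≤ G` of the
normalizers of `K^𝔉 O_{π'}(G)`. -/
noncomputable def piPrimeNorm (π : Set ℕ) (res : ∀ (A : Type u) [Group A], Subgroup A)
    (G : Type u) [Group G] : Subgroup G :=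
  HFnorm res (fun B iB => letI := iB; Opi {p | p ∉ π} B) G

/-
A surjection `φ : G → G'` carries the `𝔉`-residual of `φ⁻¹(K')` onto the `𝔉`-residual of `K'`
(as `𝔉` is quotient-closed) and, since `ℌ` is quotient-closed, maps `G_ℌ` into `G'_ℌ`.
So if `g` normalizes `K^𝔉 G_ℌ` with `K = φ⁻¹(K')`, then `φ g` normalizes
`φ(K^𝔉 G_ℌ) = K'^𝔉 φ(G_ℌ)`, hence also its product with the normal subgroup `G'_ℌ`,
which is `K'^𝔉 G'_ℌ`.
-/

namespace IsResidual

variable {F : GroupClass.{u}} {A B : Type u} [Group A] [Group B] {RA : Subgroup A}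
  {RB : Subgroup B} {f : A →* B}

theorem map_le_of_surjective (hFq : F.QClosed) (hA : IsResidual F A RA) (hB : IsResidual F B RB)
    (hf : Function.Surjective f) : RA.map f ≤ RB := by
  obtain ⟨-, -, hRA_min⟩ := hA
  obtain ⟨hRB_normal, hRB_mem, -⟩ := hB
  let g : A →* B ⧸ RB := (QuotientGroup.mk' RB).comp f
  have hg : Function.Surjective g := (QuotientGroup.mk'_surjective RB).comp hf
  let e : B ⧸ RB ≃* A ⧸ g.ker := (QuotientGroup.quotientKerEquivOfSurjective g hg).symm
  have hRA_le : RA ≤ g.ker :=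
    hRA_min g.ker inferInstance (hFq _ _ e.toMonoidHom e.surjective hRB_mem)
  rwa [Subgroup.map_le_iff_le_comap, ← QuotientGroup.ker_mk' RB, MonoidHom.comap_ker]

theorem le_map_of_surjective (hFq : F.QClosed) (hA : IsResidual F A RA) (hB : IsResidual F B RB)
    (hf : Function.Surjective f) : RB ≤ RA.map f := by
  obtain ⟨hRA_normal, hRA_mem, -⟩ := hA
  obtain ⟨-, -, hRB_min⟩ := hB
  have hmap_normal : (RA.map f).Normal := hRA_normal.map f hf
  exact hRB_min _ hmap_normal (hFq _ _ (QuotientGroup.map RA (RA.map f) f (RA.le_comap_map f))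
    (QuotientGroup.map_surjective_of_surjective _ _ _ (QuotientGroup.mk_surjective.comp hf) _)
    hRA_mem)

theorem map_eq_of_surjective (hFq : F.QClosed) (hA : IsResidual F A RA) (hB : IsResidual F B RB)
    (hf : Function.Surjective f) : RA.map f = RB :=
  (hA.map_le_of_surjective hFq hB hf).antisymm (hA.le_map_of_surjective hFq hB hf)

end IsResidual

theorem IsHRadical.map_le_of_surjective {Hc : GroupClass.{u}} {A B : Type u} [Group A] [Group B]
    {RA : Subgroup A} {RB : Subgroup B} {f : A →* B} (hHq : Hc.QClosed) (hA : IsHRadical Hc A RA)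
    (hB : IsHRadical Hc B RB) (hf : Function.Surjective f) : RA.map f ≤ RB :=
  hB.2.2 _ (hA.1.map f hf) (hHq _ _ (f.subgroupMap RA) (f.subgroupMap_surjective RA) hA.2.1)

theorem map_residual_comap_eq {F : GroupClass.{u}} (hFq : F.QClosed)
    (res : ∀ (A : Type u) [Group A], Subgroup A)
    (hres : ∀ (A : Type u) [Group A] [Finite A], IsResidual F A (res A))
    {G G' : Type u} [Group G] [Group G'] [Finite G] [Finite G'] {φ : G →* G'}
    (hφ : Function.Surjective φ) (K' : Subgroup G') :
    ((res (K'.comap φ)).map (K'.comap φ).subtype).map φ = (res K').map K'.subtype := by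
  have hres_map : (res (K'.comap φ)).map (φ.subgroupComap K') = res K' :=
    (hres _).map_eq_of_surjective hFq (hres _) (φ.subgroupComap_surjective_of_surjective K' hφ)
  rw [← hres_map, Subgroup.map_map, Subgroup.map_map]
  rfl

theorem hfnorm_map_le_general (Hc F : GroupClass.{u})
    (hHq : Hc.QClosed)
    (hFq : F.QClosed)
    (res rad : ∀ (A : Type u) [Group A], Subgroup A)
    (hres : ∀ (A : Type u) [Group A] [Finite A], IsResidual F A (res A))
    (hrad : ∀ (A : Type u) [Group A] [Finite A], IsHRadical Hc A (rad A))
    (G : Type u) [Group G] [Finite G] (N : Subgroup G) [hN : N.Normal] :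
    Subgroup.map (QuotientGroup.mk' N) (HFnorm res rad G) ≤ HFnorm res rad (G ⧸ N) := by
  rintro _ ⟨g, hg, rfl⟩
  refine Subgroup.mem_iInf.mpr fun K' => ?_
  have hmk := QuotientGroup.mk'_surjective N
  have hrad_le : (rad G).map (QuotientGroup.mk' N) ≤ rad (G ⧸ N) :=
    (hrad G).map_le_of_surjective hHq (hrad _) hmk
  have hsup_eq : (res K').map K'.subtype ⊔ rad (G ⧸ N) =
      ((res (K'.comap (QuotientGroup.mk' N))).map (K'.comap _).subtype ⊔ rad G).map
        (QuotientGroup.mk' N) ⊔ rad (G ⧸ N) := by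
    rw [Subgroup.map_sup, map_residual_comap_eq hFq res hres hmk, sup_assoc,
      sup_eq_right.mpr hrad_le]
  have : (rad (G ⧸ N)).Normal := (hrad _).1
  rw [hsup_eq]
  exact Subgroup.normalizer_le_normalizer_sup_normal
    (Subgroup.le_normalizer_map _ ⟨g, Subgroup.mem_iInf.mp hg _, rfl⟩)

/-- For a quotient-closed Fitting class `ℌ`, a formation `𝔉`, and
`N ⊴ G` finite, `N_{ℌ,𝔉}(G)N/N ≤ N_{ℌ,𝔉}(G/N)`. -/
theorem hfnorm_map_le (Hc F : GroupClass.{u})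
    (hHn : Hc.NClosed) (hHp : Hc.NProdClosed) (hHq : Hc.QClosed)
    (hFq : F.QClosed) (hFsd : F.SubdirClosed)
    (res rad : ∀ (A : Type u) [Group A], Subgroup A)
    (hres : ∀ (A : Type u) [Group A] [Finite A], IsResidual F A (res A))
    (hrad : ∀ (A : Type u) [Group A] [Finite A], IsHRadical Hc A (rad A))
    (G : Type u) [Group G] [Finite G] (N : Subgroup G) [hN : N.Normal] :
    Subgroup.map (QuotientGroup.mk' N) (HFnorm res rad G) ≤ HFnorm res rad (G ⧸ N) :=
  hfnorm_map_le_general Hc F hHq hFq res rad hres hrad G N (hN := hN)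
end

section
/- Let ℌ be a Fitting class and 𝔉 a subgroup-closed formation. If a finite group G satisfies G/G_ℌ ∈ 𝔑∘𝔉 (i.e., (G/G_ℌ)^𝔉 is nilpotent) and G > 1, then the ℌ-𝔉-norm N_{ℌ,𝔉}(G) = ⋂_{H ≤ G} N_G(H^𝔉 G_ℌ) is nontrivial. -/
universe u

/-!
If `G_ℌ ≠ 1`, it lies in every `K^𝔉 G_ℌ`, hence in the norm. Otherwise `G ≅ G/G_ℌ`,
and since `𝔉` is closed under subgroups and quotients, every `K^𝔉` lies in the nilpotent
residual `G^𝔉`. The centralizer of `G^𝔉` then normalizes every `K^𝔉`, and it is nontrivial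
because a nontrivial nilpotent group has nontrivial centre.
-/

open Subgroup

theorem IsResidual.map_le {F : GroupClass.{u}} (hFq : F.QClosed) (hFs : F.SClosed)
    {K A : Type u} [Group K] [Group A] {RK : Subgroup K} (hK : IsResidual F K RK)
    (N : Subgroup A) [N.Normal] (hN : F (A ⧸ N)) (f : K →* A) : RK.map f ≤ N := by
  set g := (QuotientGroup.mk' N).comp f
  have hg : F (K ⧸ g.ker) :=
    hFq _ _ (QuotientGroup.quotientKerEquivRange g).symm.toMonoidHom
      (MulEquiv.surjective _) (hFs _ g.range hN)
  rw [map_le_iff_le_comap, ← QuotientGroup.ker_mk' N, MonoidHom.comap_ker]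
  exact hK.2.2 g.ker g.normal_ker hg

theorem Subgroup.isNilpotent_comap_of_injective {G H : Type*} [Group G] [Group H] {f : G →* H}
    (hf : Function.Injective f) (N : Subgroup H) [Group.IsNilpotent N] :
    Group.IsNilpotent (N.comap f) :=
  isNilpotent_of_ker_le_center (f.subgroupComap N) <| by
    rw [(MonoidHom.ker_eq_bot_iff _).mpr fun x y h => Subtype.ext (hf (congrArg Subtype.val h))]
    exact bot_le

theorem Subgroup.centralizer_ne_bot_of_isNilpotent {G : Type*} [Group G] [Nontrivial G]
    (T : Subgroup G) [Group.IsNilpotent T] : centralizer (T : Set G) ≠ ⊥ := by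
  rcases T.bot_or_nontrivial with rfl | _
  · rw [coe_bot, centralizer_eq_top_iff_subset.mpr (by simp)]
    exact top_ne_bot
  obtain ⟨⟨z, hz⟩, hz1⟩ :=
    (center T).ne_bot_iff_exists_ne_one.mp (Group.IsNilpotent.center_ne_bot T)
  have hzC : (z : G) ∈ centralizer (T : Set G) := fun t ht =>
    congrArg Subtype.val (mem_center_iff.mp hz ⟨t, ht⟩)
  intro hbot
  rw [hbot, mem_bot] at hzC
  exact hz1 (by ext; exact hzC)

section
variable (res rad : ∀ (A : Type u) [Group A], Subgroup A) {G : Type u} [Group G]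

theorem rad_le_HFnorm : rad G ≤ HFnorm res rad G :=
  le_iInf fun _ => le_sup_right.trans le_normalizer

theorem centralizer_le_HFnorm {T : Subgroup G}
    (hT : ∀ K : Subgroup G, (res K).map K.subtype ⊔ rad G ≤ T) :
    centralizer (T : Set G) ≤ HFnorm res rad G :=
  le_iInf fun K => (centralizer_le (hT K)).trans (centralizer_le_normalizer _)

end

theorem hfnorm_ne_bot_general (Hc F : GroupClass.{u})
    (hFq : F.QClosed) (hFs : F.SClosed)
    (res rad : ∀ (A : Type u) [Group A], Subgroup A)
    (hres : ∀ (A : Type u) [Group A] [Finite A], IsResidual F A (res A))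
    (hrad : ∀ (A : Type u) [Group A] [Finite A], IsHRadical Hc A (rad A))
    (G : Type u) [Group G] [Finite G] [Nontrivial G]
    (hG : letI := (hrad G).1; Group.IsNilpotent ↥(res (G ⧸ rad G))) :
    HFnorm res rad G ≠ ⊥ := by
  have := (hrad G).1
  by_cases hR : rad G = ⊥
  · set π := QuotientGroup.mk' (rad G)
    have hπ : Function.Injective π := by
      rw [← MonoidHom.ker_eq_bot_iff, QuotientGroup.ker_mk', hR]
    have hT (K : Subgroup G) :
        (res K).map K.subtype ⊔ rad G ≤ (res (G ⧸ rad G)).comap π := by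
      refine sup_le ?_ (hR.trans_le bot_le)
      rw [← map_le_iff_le_comap, map_map]
      obtain ⟨_, hQ, -⟩ := hres (G ⧸ rad G)
      exact (hres K).map_le hFq hFs _ hQ _
    have := isNilpotent_comap_of_injective hπ (res (G ⧸ rad G))
    exact ne_bot_of_le_ne_bot (centralizer_ne_bot_of_isNilpotent _)
      (centralizer_le_HFnorm res rad hT)
  · exact ne_bot_of_le_ne_bot hR (rad_le_HFnorm res rad)

/-- For a Fitting class `ℌ` and a subgroup-closed formation `𝔉`,
if `G` is a nontrivial finite group with `G/G_ℌ ∈ 𝔑∘𝔉` (i.e. `(G/G_ℌ)^𝔉` is nilpotent),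
then `N_{ℌ,𝔉}(G) > 1`. -/
theorem hfnorm_ne_bot (Hc F : GroupClass.{u})
    (hHn : Hc.NClosed) (hHp : Hc.NProdClosed)
    (hFq : F.QClosed) (hFsd : F.SubdirClosed) (hFs : F.SClosed)
    (res rad : ∀ (A : Type u) [Group A], Subgroup A)
    (hres : ∀ (A : Type u) [Group A] [Finite A], IsResidual F A (res A))
    (hrad : ∀ (A : Type u) [Group A] [Finite A], IsHRadical Hc A (rad A))
    (G : Type u) [Group G] [Finite G] [Nontrivial G]
    (hG : letI := (hrad G).1; Group.IsNilpotent ↥(res (G ⧸ rad G))) :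
    HFnorm res rad G ≠ ⊥ :=
  hfnorm_ne_bot_general Hc F hFq hFs res rad hres hrad G hG
end

section
/- Let 𝔉 be a formation, π a set of primes, and G a finite group. Then the π(𝔑∘𝔉)-hypercentre of G is trivial if and only if C_G(G^𝔉) = 1 and O_{π'}(G) = 1. -/
universe u

/-!
Both `C_G(G^𝔉)` and `O_{π'}(G)` are π(𝔑∘𝔉)-hypercentral, which gives one direction. For a chief
factor `L/K` below `C_G(G^𝔉)`, the residual `G^𝔉` centralizes `L/K`, so `Q = G/C_G(L/K) ∈ 𝔉`. In
`T = (L/K) ⋊ Q` either `L/K` is abelian and `T^𝔉 ≤ L/K` is abelian, or `L ∩ C_G(L/K) = K`, so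
`L/K` embeds `Q`-equivariantly in `Q` and `T ∈ 𝔉` is a subdirect product of two copies of `Q`.

Conversely, a minimal normal subgroup `A` of `G` inside a π(𝔑∘𝔉)-hypercentral subgroup is not a
π'-group, so `T = A ⋊ G/C_G(A)` has nilpotent 𝔉-residual. A nilpotent normal subgroup centralizes
every minimal normal subgroup, and as `A` is minimal normal in `T`, with `G/C_G(A)` acting
faithfully and containing the inner automorphisms, this forces `T^𝔉 ≤ A`. Hence
`G/C_G(A) ∈ 𝔉`, so `A ≤ C_G(G^𝔉) = 1`.
-/

open Subgroup
open scoped commutatorElement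

namespace GroupClass

variable {F : GroupClass.{u}}

theorem QClosed.of_mulEquiv (hQ : F.QClosed) {G H : Type u} [Group G] [Group H] (e : G ≃* H)
    (hG : F G) : F H :=
  hQ G H e.toMonoidHom e.surjective hG

theorem QClosed.quotient_of_le (hQ : F.QClosed) {G : Type u} [Group G] {N M : Subgroup G}
    [N.Normal] [M.Normal] (hNM : N ≤ M) (hN : F (G ⧸ N)) : F (G ⧸ M) :=
  hQ _ _ (QuotientGroup.map N M (MonoidHom.id G) hNM)
    (QuotientGroup.map_surjective_of_surjective N M (MonoidHom.id G) QuotientGroup.mk_surjective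
      hNM) hN

theorem QClosed.quotient_ker_iff (hQ : F.QClosed) {G H : Type u} [Group G] [Group H]
    {f : G →* H} (hf : Function.Surjective f) : F (G ⧸ f.ker) ↔ F H :=
  ⟨hQ.of_mulEquiv (QuotientGroup.quotientKerEquivOfSurjective f hf),
    hQ.of_mulEquiv (QuotientGroup.quotientKerEquivOfSurjective f hf).symm⟩

theorem SubdirClosed.of_ker_inf_ker_eq_bot (hQ : F.QClosed) (hSD : F.SubdirClosed)
    {G H₁ H₂ : Type u} [Group G] [Group H₁] [Group H₂] {f₁ : G →* H₁} {f₂ : G →* H₂}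
    (hf₁ : Function.Surjective f₁) (hf₂ : Function.Surjective f₂) (h₁ : F H₁) (h₂ : F H₂)
    (hker : f₁.ker ⊓ f₂.ker = ⊥) : F G := by
  have h : F (G ⧸ (f₁.ker ⊓ f₂.ker)) := hSD G _ _ inferInstance inferInstance
    ((hQ.quotient_ker_iff hf₁).mpr h₁) ((hQ.quotient_ker_iff hf₂).mpr h₂)
  exact hQ.of_mulEquiv QuotientGroup.quotientBot (hQ.quotient_of_le hker.le h)

end GroupClass

namespace IsResidual

variable {F : GroupClass.{u}} {G : Type u} [Group G] {R : Subgroup G}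

theorem normal (h : IsResidual F G R) : R.Normal := h.1

theorem quotient_mem [R.Normal] (h : IsResidual F G R) : F (G ⧸ R) := h.2.1

theorem le (h : IsResidual F G R) {N : Subgroup G} [N.Normal] (hN : F (G ⧸ N)) : R ≤ N :=
  h.2.2 N inferInstance hN

theorem eq_bot (hQ : F.QClosed) (h : IsResidual F G R) (hG : F G) : R = ⊥ :=
  le_bot_iff.mp (h.le (hQ.of_mulEquiv QuotientGroup.quotientBot.symm hG))

end IsResidual

section PiGroups

variable {G : Type u} [Group G] {σ : Set ℕ}

theorem Subgroup.card_sup_dvd_card_mul_card (B M : Subgroup G) [M.Normal] :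
    Nat.card ↥(B ⊔ M) ∣ Nat.card B * Nat.card M := by
  rw [card_eq_card_quotient_mul_card_subgroup (M.subgroupOf (B ⊔ M)),
    Nat.card_congr (subgroupOfEquivOfLe le_sup_right).toEquiv,
    ← Nat.card_congr (QuotientGroup.quotientInfEquivProdNormalQuotient B M).toEquiv]
  exact mul_dvd_mul (card_quotient_dvd_card _) dvd_rfl

theorem IsPiGroup.sup {B M : Subgroup G} [M.Normal] (hB : IsPiGroup σ B) (hM : IsPiGroup σ M) :
    IsPiGroup σ ↥(B ⊔ M) := fun p hp hpBM =>
  ((Nat.Prime.dvd_mul hp).mp (hpBM.trans (card_sup_dvd_card_mul_card B M))).elim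
    (hB p hp) (hM p hp)

theorem le_Opi {N : Subgroup G} (hN : N.Normal) (hσ : IsPiGroup σ N) : N ≤ Opi σ G :=
  le_iSup₂_of_le N hN (le_iSup_of_le hσ le_rfl)

theorem Opi_normal_and_isPiGroup [Finite G] : (Opi σ G).Normal ∧ IsPiGroup σ (Opi σ G) := by
  let S := {N : Subgroup G | N.Normal ∧ IsPiGroup σ N}
  have hOpi : Opi σ G = sSup S := by
    simp only [Opi, S, sSup_eq_iSup, Set.mem_ofPred_eq, iSup_and]
  rw [hOpi]
  refine SupClosed.sSup_mem (s := S) ?_ (Set.toFinite S) ?_ subset_rfl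
  · rintro B ⟨hBn, hB⟩ M ⟨hMn, hM⟩
    exact ⟨Subgroup.sup_normal B M, hB.sup hM⟩
  · refine ⟨inferInstance, fun p hp hpd => absurd ?_ hp.ne_one⟩
    exact Nat.dvd_one.mp (card_bot (G := G) ▸ hpd)

end PiGroups

section MinimalNormal

variable {T : Type*} [Group T]

theorem Group.isNilpotent_of_isMulCommutative [IsMulCommutative T] : Group.IsNilpotent T :=
  ⟨1, upperCentralSeries_one_eq_top_iff.mpr ‹_›⟩

theorem Subgroup.Normal.inf_center_ne_bot [Group.IsNilpotent T] {N : Subgroup T} (hN : N.Normal)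
    (hN' : N ≠ ⊥) : N ⊓ center T ≠ ⊥ := by
  intro hZ
  obtain ⟨n, hn⟩ := Group.IsNilpotent.nilpotent' (G := T)
  suffices ∀ k, N ⊓ upperCentralSeries T k = ⊥ from hN' (by simpa [hn] using this n)
  intro k
  induction k with
  | zero => simp
  | succ k ih =>
    refine eq_bot_iff.mpr fun x hx => hZ ▸ ⟨hx.1, mem_center_iff.mpr fun y => ?_⟩
    have hxy : ⁅x, y⁆ ∈ N ⊓ upperCentralSeries T k :=
      ⟨commutator_le_left N ⊤ (commutator_mem_commutator hx.1 (mem_top y)),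
        mem_upperCentralSeries_succ_iff.mp hx.2 y⟩
    rw [ih, mem_bot, commutatorElement_eq_one_iff_mul_comm] at hxy
    exact hxy.symm

theorem exists_isChiefFactor_bot_le [Finite T] {N : Subgroup T} (hN : N.Normal) (hN' : N ≠ ⊥) :
    ∃ A ≤ N, IsChiefFactor T ⊥ A := by
  obtain ⟨A, hAN, ⟨hAn, hAb⟩, hAmin⟩ :=
    exists_minimal_le_of_wellFoundedLT (fun B : Subgroup T => B.Normal ∧ B ≠ ⊥) N ⟨hN, hN'⟩
  refine ⟨A, hAN, inferInstance, hAn, bot_lt_iff_ne_bot.mpr hAb, fun M hM _ hMA => ?_⟩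
  exact or_iff_not_imp_left.mpr fun hMb => le_antisymm hMA (hAmin ⟨hM, hMb⟩ hMA)

theorem le_centralizer_of_minimal_normal {A R : Subgroup T} [A.Normal] [R.Normal]
    [Group.IsNilpotent R] (hA : ∀ B : Subgroup T, B.Normal → B ≤ A → B = ⊥ ∨ B = A) :
    R ≤ centralizer A := by
  rcases hA (A ⊓ R) inferInstance inf_le_left with h | h
  · rw [← commutator_eq_bot_iff_le_centralizer, eq_bot_iff, ← h, inf_comm]
    exact commutator_le_inf R A
  rcases hA (A ⊓ centralizer R) inferInstance inf_le_left with hZ | hZ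
  · refine le_centralizer_iff.mpr (le_of_eq_of_le ?_ bot_le)
    by_contra hA'
    have hAR : A.subgroupOf R ≠ ⊥ := by
      rwa [Ne, subgroupOf_eq_bot, disjoint_iff, inf_eq_left.mpr (inf_eq_left.mp h)]
    obtain ⟨⟨x, hxR⟩, ⟨hxA, hxZ⟩, hx⟩ :=
      (bot_or_exists_ne_one _).resolve_left (Normal.inf_center_ne_bot inferInstance hAR)
    have hxAZ : x ∈ A ⊓ centralizer R :=
      ⟨hxA, fun y hy => congrArg Subtype.val (mem_center_iff.mp hxZ ⟨y, hy⟩)⟩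
    rw [hZ, mem_bot] at hxAZ
    exact hx (Subtype.ext hxAZ)
  · exact le_centralizer_iff.mp (inf_eq_left.mp hZ)

end MinimalNormal

namespace SemidirectProduct

variable {N Q : Type*} [Group N] [Group Q] {φ : Q →* MulAut N}

instance instFinite [Finite N] [Finite Q] : Finite (N ⋊[φ] Q) :=
  Finite.of_equiv _ equivProd.symm

theorem inl_left_of_mem_ker {t : N ⋊[φ] Q} (ht : t ∈ (rightHom : N ⋊[φ] Q →* Q).ker) :
    inl t.left = t :=
  SemidirectProduct.ext rfl ht.symm

theorem apply_right_of_mem_centralizer {t : N ⋊[φ] Q}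
    (ht : t ∈ centralizer ((rightHom : N ⋊[φ] Q →* Q).ker : Set (N ⋊[φ] Q))) (a : N) :
    φ t.right a = t.left⁻¹ * a * t.left := by
  have h := congrArg left ((mem_centralizer_iff.mp ht) (inl a) (by simp))
  simp only [mul_left, left_inl, right_inl, map_one, MulAut.one_apply] at h
  rw [mul_assoc, eq_inv_mul_iff_mul_eq, h]

theorem ker_rightHom_le_centralizer [IsMulCommutative N] :
    (rightHom : N ⋊[φ] Q →* Q).ker ≤ centralizer (rightHom : N ⋊[φ] Q →* Q).ker := by
  rw [← range_inl_eq_ker_rightHom]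
  rintro _ ⟨a, rfl⟩ _ ⟨b, rfl⟩
  rw [← map_mul, ← map_mul, mul_comm' a b]

theorem centralizer_ker_rightHom_le (hφ : Function.Injective φ)
    (hcomm : (rightHom : N ⋊[φ] Q →* Q).ker ≤ centralizer (rightHom : N ⋊[φ] Q →* Q).ker) :
    centralizer (rightHom : N ⋊[φ] Q →* Q).ker ≤ (rightHom : N ⋊[φ] Q →* Q).ker := by
  intro t ht
  refine (MonoidHom.mem_ker).mpr (hφ (MulEquiv.ext fun a => ?_))
  have hat : inl t.left * inl a = inl (φ := φ) a * inl t.left :=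
    hcomm (show inl a ∈ _ by simp) (inl t.left) (by simp)
  have hat' : t.left * a = a * t.left := inl_injective (by simpa only [map_mul] using hat)
  rw [rightHom_eq_right, apply_right_of_mem_centralizer ht, map_one, MulAut.one_apply, mul_assoc,
    ← hat', inv_mul_cancel_left]

def leftInv {R : Subgroup (N ⋊[φ] Q)}
    (hR : R ≤ centralizer (rightHom : N ⋊[φ] Q →* Q).ker) : R →* N where
  toFun t := (t : N ⋊[φ] Q).left⁻¹
  map_one' := by simp
  map_mul' s t := by simp [apply_right_of_mem_centralizer (hR s.2), mul_assoc]

theorem leftInv_apply {R : Subgroup (N ⋊[φ] Q)}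
    (hR : R ≤ centralizer (rightHom : N ⋊[φ] Q →* Q).ker) (t : R) :
    leftInv hR t = (t : N ⋊[φ] Q).left⁻¹ := rfl

theorem leftInv_injective (hφ : Function.Injective φ) {R : Subgroup (N ⋊[φ] Q)}
    (hR : R ≤ centralizer (rightHom : N ⋊[φ] Q →* Q).ker) : Function.Injective (leftInv hR) := by
  refine (injective_iff_map_eq_one _).mpr fun t ht => ?_
  rw [leftInv_apply, inv_eq_one] at ht
  have hright : (t : N ⋊[φ] Q).right = 1 :=
    hφ (MulEquiv.ext fun a => by simp [apply_right_of_mem_centralizer (hR t.2), ht])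
  exact Subtype.ext (SemidirectProduct.ext ht hright)

theorem leftInv_conj {R : Subgroup (N ⋊[φ] Q)} [R.Normal]
    (hR : R ≤ centralizer (rightHom : N ⋊[φ] Q →* Q).ker) (q : Q) (t : R) :
    leftInv hR ⟨inr q * (t : N ⋊[φ] Q) * (inr q)⁻¹, ‹R.Normal›.conj_mem _ t.2 _⟩ =
      φ q (leftInv hR t) := by
  simp [leftInv_apply]

theorem map_inl_normal (hconj : ∀ a : N, ∃ q : Q, φ q = MulAut.conj a) {S : Subgroup N}
    (hS : ∀ q : Q, ∀ a ∈ S, φ q a ∈ S) : (S.map (inl : N →* N ⋊[φ] Q)).Normal := by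
  refine ⟨?_⟩
  rintro _ ⟨m, hm, rfl⟩ w
  obtain ⟨q, hq⟩ := hconj w.left
  have hw : w * inl m * w⁻¹ = inl (φ q (φ w.right m)) := by
    refine SemidirectProduct.ext ?_ (by simp)
    simp [hq, MulAut.conj_apply]
  exact hw ▸ mem_map_of_mem _ (hS q _ (hS w.right m hm))

/-- If `N` is nilpotent, minimality makes it abelian and hence self-centralizing. Otherwise
`leftInv` embeds `R` in `N` with a `φ`-invariant image, which minimality forces to be trivial. -/
theorem le_ker_rightHom_of_isNilpotent (hφ : Function.Injective φ)
    (hconj : ∀ a : N, ∃ q : Q, φ q = MulAut.conj a)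
    (hmin : ∀ W : Subgroup (N ⋊[φ] Q), W.Normal → W ≤ (rightHom : N ⋊[φ] Q →* Q).ker →
      W = ⊥ ∨ W = (rightHom : N ⋊[φ] Q →* Q).ker)
    {R : Subgroup (N ⋊[φ] Q)} [R.Normal] [Group.IsNilpotent R] :
    R ≤ (rightHom : N ⋊[φ] Q →* Q).ker := by
  have hRC : R ≤ centralizer (rightHom : N ⋊[φ] Q →* Q).ker :=
    le_centralizer_of_minimal_normal hmin
  by_cases hN : Group.IsNilpotent N
  · have : Group.IsNilpotent (rightHom : N ⋊[φ] Q →* Q).ker :=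
      Group.nilpotent_of_surjective (inl.codRestrict _ fun a => by simp)
        fun t => ⟨t.1.left, Subtype.ext (inl_left_of_mem_ker t.2)⟩
    exact hRC.trans (centralizer_ker_rightHom_le hφ (le_centralizer_of_minimal_normal hmin))
  have hS : ∀ q : Q, ∀ a ∈ (leftInv hRC).range, φ q a ∈ (leftInv hRC).range := by
    rintro q _ ⟨t, rfl⟩
    exact ⟨_, leftInv_conj hRC q t⟩
  rcases hmin _ (map_inl_normal hconj hS) (by rintro _ ⟨a, -, rfl⟩; simp) with h | h
  · have hμ : leftInv hRC = 1 := MonoidHom.range_eq_bot_iff.mp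
      (map_injective inl_injective (h.trans (Subgroup.map_bot _).symm))
    intro t ht
    have ht1 : (⟨t, ht⟩ : R) = 1 := leftInv_injective hφ hRC (by rw [hμ, map_one]; rfl)
    rw [show t = 1 from congrArg Subtype.val ht1]
    exact one_mem _
  · have hμ : (leftInv hRC).range = ⊤ := map_injective inl_injective
      (h.trans (by rw [← range_inl_eq_ker_rightHom, MonoidHom.range_eq_map]))
    exact absurd (Group.nilpotent_of_surjective _ (MonoidHom.range_eq_top.mp hμ)) hN

end SemidirectProduct

open SemidirectProduct in
theorem GroupClass.SubdirClosed.semidirectProduct_mem {F : GroupClass.{u}} (hQ : F.QClosed)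
    (hSD : F.SubdirClosed) {N Q : Type u} [Group N] [Group Q] {φ : Q →* MulAut N} (ι : N →* Q)
    (hι : Function.Injective ι) (hιφ : ∀ q a, ι (φ q a) = q * ι a * q⁻¹) (hQF : F Q) :
    F (N ⋊[φ] Q) := by
  let ψ : N ⋊[φ] Q →* Q := lift ι (MonoidHom.id Q) fun q => by ext a; exact hιφ q a
  refine hSD.of_ker_inf_ker_eq_bot hQ rightHom_surjective (f₂ := ψ)
    (fun q => ⟨inr q, by simp [ψ]⟩) hQF hQF (eq_bot_iff.mpr fun t ⟨ht₁, ht₂⟩ => ?_)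
  have hright : t.right = 1 := ht₁
  have hψ : ι t.left * t.right = 1 := ht₂
  have hleft : t.left = 1 := hι (by simpa [hright] using hψ)
  exact mem_bot.mpr (SemidirectProduct.ext hleft hright)

section SectionConj

variable {G : Type*} [Group G] (K L : Subgroup G) [K.Normal] [L.Normal]

theorem map_conjNormal_subgroupOf (g : G) :
    (K.subgroupOf L).map (MulAut.conjNormal g : L ≃* L).toMonoidHom = K.subgroupOf L := by
  ext x
  rw [mem_map_equiv]
  change (MulAut.conjNormal g)⁻¹ x ∈ K.subgroupOf L ↔ _
  rw [← map_inv, mem_subgroupOf, mem_subgroupOf, MulAut.conjNormal_apply, inv_inv, mul_assoc,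
    ‹K.Normal›.mem_comm_iff, mul_inv_cancel_right]

def sectionConj : G →* MulAut (L ⧸ K.subgroupOf L) where
  toFun g := QuotientGroup.congr _ _ (MulAut.conjNormal g) (map_conjNormal_subgroupOf K L g)
  map_one' := by
    ext x
    induction x using QuotientGroup.induction_on
    simp
  map_mul' g h := by
    ext x
    induction x using QuotientGroup.induction_on with | H x
    change ((MulAut.conjNormal (g * h) x : L) : L ⧸ K.subgroupOf L) =
      ((MulAut.conjNormal g (MulAut.conjNormal h x) : L) : L ⧸ K.subgroupOf L)
    rw [map_mul]
    rfl

theorem sectionConj_mk (g : G) (x : L) :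
    sectionConj K L g (x : L ⧸ K.subgroupOf L) =
      (⟨g * x * g⁻¹, ‹L.Normal›.conj_mem x x.2 g⟩ : L) :=
  rfl

theorem mem_ker_sectionConj {g : G} :
    g ∈ (sectionConj K L).ker ↔ ∀ x ∈ L, g * x * g⁻¹ * x⁻¹ ∈ K := by
  simp only [MonoidHom.mem_ker, MulEquiv.ext_iff, QuotientGroup.forall_mk, Subtype.forall,
    sectionConj_mk, MulAut.one_apply, QuotientGroup.eq, mem_subgroupOf]
  refine forall₂_congr fun x _ => ?_
  rw [← inv_mem_iff, ‹K.Normal›.mem_comm_iff]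
  simp [mul_assoc]

theorem le_ker_sectionConj : K ≤ (sectionConj K L).ker := fun k hk =>
  (mem_ker_sectionConj K L).mpr fun x _ => by
    simpa only [mul_assoc] using K.mul_mem hk (‹K.Normal›.conj_mem _ (K.inv_mem hk) x)

theorem isMulCommutative_of_le_ker_sectionConj (hL : L ≤ (sectionConj K L).ker) :
    IsMulCommutative (L ⧸ K.subgroupOf L) := by
  refine ⟨⟨fun a b => ?_⟩⟩
  induction a using QuotientGroup.induction_on with | H x
  induction b using QuotientGroup.induction_on with | H y
  have hxy : ((x * y * x⁻¹ : L) : L ⧸ K.subgroupOf L) = y :=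
    DFunLike.congr_fun (MonoidHom.mem_ker.mp (hL x.2)) (y : L ⧸ K.subgroupOf L)
  calc (x : L ⧸ K.subgroupOf L) * y = ((x * y * x⁻¹ * x : L) : L ⧸ K.subgroupOf L) := by
        rw [inv_mul_cancel_right, QuotientGroup.mk_mul]
    _ = y * x := by rw [QuotientGroup.mk_mul, hxy]

end SectionConj

section ConjAction

variable {G : Type*} [Group G] {K L C : Subgroup G} [K.Normal] [L.Normal] [C.Normal]

def IsConjAction (φ : G ⧸ C →* MulAut (L ⧸ K.subgroupOf L)) : Prop :=
  ∀ (g : G) (x : L), φ g x = (⟨g * x * g⁻¹, ‹L.Normal›.conj_mem x x.2 g⟩ : L)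

variable {φ : G ⧸ C →* MulAut (L ⧸ K.subgroupOf L)}

theorem IsConjAction.comp_mk'_eq_sectionConj (hφ : IsConjAction φ) :
    φ.comp (QuotientGroup.mk' C) = sectionConj K L := by
  ext g a
  induction a using QuotientGroup.induction_on with | H x
  exact hφ g x

theorem IsConjAction.injective (hφ : IsConjAction φ)
    (hC : ∀ g : G, g ∈ C ↔ ∀ x ∈ L, g * x * g⁻¹ * x⁻¹ ∈ K) : Function.Injective φ := by
  refine (injective_iff_map_eq_one φ).mpr fun q hq => ?_
  induction q using QuotientGroup.induction_on with | H g
  rw [QuotientGroup.eq_one_iff, hC, ← mem_ker_sectionConj, MonoidHom.mem_ker,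
    ← hφ.comp_mk'_eq_sectionConj]
  exact hq

theorem IsConjAction.exists_eq_conj (hφ : IsConjAction φ) (a : L ⧸ K.subgroupOf L) :
    ∃ q : G ⧸ C, φ q = MulAut.conj a := by
  induction a using QuotientGroup.induction_on with | H x
  refine ⟨(x : G), MulEquiv.ext fun b => ?_⟩
  induction b using QuotientGroup.induction_on with | H y
  rw [hφ]
  rfl

open SemidirectProduct in
theorem IsConjAction.ker_rightHom_minimal (hφ : IsConjAction φ) (hcf : IsChiefFactor G K L)
    (W : Subgroup ((L ⧸ K.subgroupOf L) ⋊[φ] (G ⧸ C))) (hW : W.Normal)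
    (hWker : W ≤ (rightHom : (L ⧸ K.subgroupOf L) ⋊[φ] (G ⧸ C) →* G ⧸ C).ker) :
    W = ⊥ ∨ W = (rightHom : (L ⧸ K.subgroupOf L) ⋊[φ] (G ⧸ C) →* G ⧸ C).ker := by
  let j : L →* (L ⧸ K.subgroupOf L) ⋊[φ] (G ⧸ C) := inl.comp (QuotientGroup.mk' _)
  have hM : ((W.comap j).map L.subtype).Normal := by
    refine ⟨?_⟩
    rintro _ ⟨x, hx, rfl⟩ g
    refine ⟨⟨g * x * g⁻¹, ‹L.Normal›.conj_mem x x.2 g⟩, ?_, rfl⟩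
    change inl ((⟨g * x * g⁻¹, ‹L.Normal›.conj_mem x x.2 g⟩ : L) : L ⧸ K.subgroupOf L) ∈ W
    rw [← hφ, inl_aut, map_inv]
    exact hW.conj_mem _ hx _
  have hKM : K ≤ (W.comap j).map L.subtype := fun k hk =>
    ⟨⟨k, hcf.2.2.1.le hk⟩, by
      change inl ((⟨k, hcf.2.2.1.le hk⟩ : L) : L ⧸ K.subgroupOf L) ∈ W
      rw [(QuotientGroup.eq_one_iff _).mpr (mem_subgroupOf.mpr hk), map_one]
      exact one_mem W, rfl⟩
  rcases hcf.2.2.2 _ hM hKM (map_subtype_le _) with h | h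
  · refine Or.inl (eq_bot_iff.mpr fun w hw => ?_)
    obtain ⟨x, hx⟩ := QuotientGroup.mk_surjective w.left
    have hxw : j x = w := by rw [← inl_left_of_mem_ker (hWker hw), ← hx]; rfl
    have hxK : (x : G) ∈ K := h ▸ ⟨x, show j x ∈ W by rw [hxw]; exact hw, rfl⟩
    rw [mem_bot, ← hxw]
    exact congrArg inl ((QuotientGroup.eq_one_iff x).mpr (mem_subgroupOf.mpr hxK)) |>.trans
      (map_one _)
  · refine Or.inr (le_antisymm hWker fun w hw => ?_)
    obtain ⟨x, hx⟩ := QuotientGroup.mk_surjective w.left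
    obtain ⟨y, hyW, hyx⟩ : (x : G) ∈ (W.comap j).map L.subtype := h.ge x.2
    rw [← inl_left_of_mem_ker hw, ← hx, ← Subtype.ext hyx]
    exact hyW

end ConjAction

section Hypercentre

variable {F : GroupClass.{u}} {π : Set ℕ} {res : ∀ (A : Type u) [Group A], Subgroup A}
  {G : Type u} [Group G] [Finite G]

theorem Opi_piHypercentral (X : GroupClass.{u}) : PiHypercentral π X G (Opi {p | p ∉ π} G) := by
  obtain ⟨hn, hπ'⟩ := Opi_normal_and_isPiGroup (G := G) (σ := {p | p ∉ π})
  refine ⟨hn, fun K L _ hL ⟨p, hpπ, hp, hpd⟩ => absurd hpπ ?_⟩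
  exact hπ' p hp (hpd.trans ((card_quotient_dvd_card _).trans (card_dvd_of_le hL)))

open SemidirectProduct in
theorem centralizer_residual_piHypercentral (hQ : F.QClosed) (hSD : F.SubdirClosed)
    (hres : ∀ (A : Type u) [Group A] [Finite A], IsResidual F A (res A)) :
    PiHypercentral π (fun A iA => letI := iA; Group.IsNilpotent ↥(res A)) G
      (centralizer (res G : Set G)) := by
  have hR := hres G
  have := hR.normal
  refine ⟨inferInstance, fun K L hcf hLC _ => ?_⟩
  obtain ⟨hK, hL, hKL, hmin⟩ := hcf
  let f := sectionConj K L
  have hRf : res G ≤ f.ker := fun r hr => (mem_ker_sectionConj K L).mpr fun x hx => by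
    rw [mem_centralizer_iff.mp (hLC hx) r hr]
    simp
  have hQF : F (G ⧸ f.ker) := hQ.quotient_of_le hRf hR.quotient_mem
  refine ⟨f.ker, inferInstance, fun g => mem_ker_sectionConj K L, QuotientGroup.kerLift f,
    fun g x => rfl, ?_⟩
  let T := (L ⧸ K.subgroupOf L) ⋊[QuotientGroup.kerLift f] (G ⧸ f.ker)
  have hT := hres T
  have := hT.normal
  show Group.IsNilpotent (res T)
  rcases hmin (L ⊓ f.ker) inferInstance (le_inf hKL.le (le_ker_sectionConj K L)) inf_le_left
    with h | h
  · let ι : L ⧸ K.subgroupOf L →* G ⧸ f.ker := QuotientGroup.map _ _ L.subtype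
      fun x hx => le_ker_sectionConj K L (mem_subgroupOf.mp hx)
    have hι : Function.Injective ι := by
      refine (injective_iff_map_eq_one ι).mpr fun a ha => ?_
      induction a using QuotientGroup.induction_on with | H x
      rw [QuotientGroup.eq_one_iff, mem_subgroupOf, ← h]
      exact ⟨x.2, (QuotientGroup.eq_one_iff _).mp ha⟩
    have hιφ : ∀ q a, ι (QuotientGroup.kerLift f q a) = q * ι a * q⁻¹ := by
      intro q a
      induction q using QuotientGroup.induction_on with | H g
      induction a using QuotientGroup.induction_on with | H x
      rfl
    rw [hT.eq_bot hQ (hSD.semidirectProduct_mem hQ ι hι hιφ hQF)]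
    exact Group.isNilpotent_of_subsingleton
  · have := isMulCommutative_of_le_ker_sectionConj K L (inf_eq_left.mp h)
    have hRker : res T ≤ (rightHom : T →* G ⧸ f.ker).ker :=
      hT.le ((hQ.quotient_ker_iff rightHom_surjective).mpr hQF)
    have : IsMulCommutative (res T) := le_centralizer_iff_isMulCommutative.mp
      (hRker.trans (ker_rightHom_le_centralizer.trans (centralizer_le hRker)))
    exact Group.isNilpotent_of_isMulCommutative

open SemidirectProduct in
theorem eq_bot_of_piHypercentral (hQ : F.QClosed)
    (hres : ∀ (A : Type u) [Group A] [Finite A], IsResidual F A (res A))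
    (hC : centralizer (res G : Set G) = ⊥) (hO : Opi {p | p ∉ π} G = ⊥) {N : Subgroup G}
    (hN : PiHypercentral π (fun A iA => letI := iA; Group.IsNilpotent ↥(res A)) G N) :
    N = ⊥ := by
  by_contra hNb
  obtain ⟨A, hAN, hcf⟩ := exists_isChiefFactor_bot_le hN.1 hNb
  have := hcf.2.1
  have hAb : A ≠ ⊥ := hcf.2.2.1.ne'
  have hp : ∃ p ∈ π, p.Prime ∧ p ∣ Nat.card (A ⧸ (⊥ : Subgroup G).subgroupOf A) := by
    rw [Nat.card_congr ((QuotientGroup.quotientMulEquivOfEq (bot_subgroupOf A)).trans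
      QuotientGroup.quotientBot).toEquiv]
    by_contra! hπ'
    exact hAb (le_bot_iff.mp (hO ▸ le_Opi hcf.2.1 fun p hp hpA hpπ => hπ' p hpπ hp hpA))
  obtain ⟨C, hCn, hCmem, φ, hφ, hX⟩ := hN.2 ⊥ A hcf hAN hp
  replace hφ : IsConjAction φ := hφ
  have hT := hres ((A ⧸ (⊥ : Subgroup G).subgroupOf A) ⋊[φ] (G ⧸ C))
  have := hT.normal
  have hTA : res _ ≤ (rightHom : _ ⋊[φ] (G ⧸ C) →* G ⧸ C).ker :=
    le_ker_rightHom_of_isNilpotent (hφ.injective hCmem) hφ.exists_eq_conj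
      (hφ.ker_rightHom_minimal hcf)
  have hRC : res G ≤ C := (hres G).le ((hQ.quotient_ker_iff rightHom_surjective).mp
    (hQ.quotient_of_le hTA hT.quotient_mem))
  refine hAb (le_bot_iff.mp (hC ▸ fun a ha => mem_centralizer_iff.mpr fun r hr => ?_))
  have h := (hCmem r).mp (hRC hr) a ha
  rwa [mem_bot, mul_inv_eq_one, mul_inv_eq_iff_eq_mul] at h

end Hypercentre

/-- For a formation `𝔉`, `Z_{π(𝔑∘𝔉)}(G) = 1` iff `C_G(G^𝔉) = 1`
and `O_{π'}(G) = 1`. -/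
theorem piHypercentre_eq_bot_iff (F : GroupClass.{u})
    (hQ : F.QClosed) (hSD : F.SubdirClosed) (π : Set ℕ)
    (res : ∀ (A : Type u) [Group A], Subgroup A)
    (hres : ∀ (A : Type u) [Group A] [Finite A], IsResidual F A (res A))
    (G : Type u) [Group G] [Finite G] :
    piHypercentre π (fun A iA => letI := iA; Group.IsNilpotent ↥(res A)) G = ⊥ ↔
      Subgroup.centralizer (res G : Set G) = ⊥ ∧ Opi {p | p ∉ π} G = ⊥ := by
  refine ⟨fun h => ⟨?_, ?_⟩, fun ⟨hC, hO⟩ => sSup_eq_bot.mpr fun N hN =>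
    eq_bot_of_piHypercentral hQ hres hC hO hN⟩
  · exact le_bot_iff.mp (h ▸ le_sSup (centralizer_residual_piHypercentral hQ hSD hres))
  · exact le_bot_iff.mp (h ▸ le_sSup (Opi_piHypercentral _))
end

section
/- Let 𝔉 be a formation, π a set of primes, G a finite group with O_{π'}(G) = 1 (trivial largest normal π'-subgroup), with a unique minimal normal subgroup N, and suppose N ≤ N_{π'𝔉}(G) and N ⊄ M for some maximal subgroup M of G. Then M^𝔉 is normal in G; hence M^𝔉 = 1 (i.e., M ∈ 𝔉) and G/N ∈ 𝔉, so G^𝔉 ≤ N. -/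
universe u

/-!
Both `M` and `N` normalize `M^𝔉`: `M` because `M^𝔉` is normal in `M`, and `N` because it lies in
the `π'𝔉`-norm, which (as `O_{π'}(G) = 1`) normalizes every `K^𝔉`. Since `M` is maximal and
`N ⊄ M`, `G = MN`, so `M^𝔉 ⊴ G`. A nontrivial normal subgroup contains `N`, which `M^𝔉 ≤ M`
cannot, so `M^𝔉 = 1`, i.e. `M ∈ 𝔉`; finally `G/N` is a homomorphic image of `M`.
-/

namespace Subgroup

variable {G : Type*} [Group G]

theorem le_normalizer_map_subtype {M : Subgroup G} (K : Subgroup M) [K.Normal] :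
    M ≤ normalizer (K.map M.subtype : Set G) := by
  have h := le_normalizer_map (H := K) M.subtype
  rwa [K.normalizer_eq_top, ← MonoidHom.range_eq_map, range_subtype] at h

theorem normal_of_codisjoint_of_le_normalizer {A B R : Subgroup G} (hAB : Codisjoint A B)
    (hA : A ≤ normalizer (R : Set G)) (hB : B ≤ normalizer (R : Set G)) : R.Normal := by
  rw [← normalizer_eq_top_iff, ← top_le_iff, ← hAB.eq_top]
  exact sup_le hA hB

end Subgroup

theorem QuotientGroup.mk'_comp_subtype_surjective_of_codisjoint {G : Type*} [Group G]
    {M N : Subgroup G} [N.Normal] (h : Codisjoint M N) :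
    Function.Surjective ((QuotientGroup.mk' N).comp M.subtype) := by
  rw [← MonoidHom.range_eq_top, MonoidHom.range_comp, Subgroup.range_subtype,
    Subgroup.map_eq_range_iff.mpr, QuotientGroup.range_mk']
  rwa [QuotientGroup.ker_mk']

namespace GroupClass.QClosed

variable {F : GroupClass.{u}}

theorem of_isResidual_bot (hQ : F.QClosed) {A : Type u} [Group A] (h : IsResidual F A ⊥) :
    F A := by
  obtain ⟨_, hF, -⟩ := h
  exact hQ _ _ (QuotientGroup.quotientBot (G := A)).toMonoidHom
    (QuotientGroup.quotientBot (G := A)).surjective hF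

theorem quotient_of_codisjoint (hQ : F.QClosed) {G : Type u} [Group G] {M N : Subgroup G}
    [N.Normal] (hM : F M) (h : Codisjoint M N) : F (G ⧸ N) :=
  hQ _ _ _ (QuotientGroup.mk'_comp_subtype_surjective_of_codisjoint h) hM

end GroupClass.QClosed

theorem piPrimeNorm_le_normalizer_map_res {π : Set ℕ} (res : ∀ (A : Type u) [Group A], Subgroup A)
    {G : Type u} [Group G] (hO : Opi {p | p ∉ π} G = ⊥) (K : Subgroup G) :
    piPrimeNorm π res G ≤ Subgroup.normalizer ((res K).map K.subtype : Set G) := by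
  simp only [piPrimeNorm, HFnorm, hO, sup_bot_eq]
  exact iInf_le (fun K : Subgroup G => Subgroup.normalizer ((res K).map K.subtype : Set G)) K

theorem unique_minimal_norm_consequences_general (F : GroupClass.{u})
    (hQ : F.QClosed) (π : Set ℕ)
    (res : ∀ (A : Type u) [Group A], Subgroup A)
    (hres : ∀ (A : Type u) [Group A] [Finite A], IsResidual F A (res A))
    (G : Type u) [Group G] [Finite G]
    (hO : Opi {p | p ∉ π} G = ⊥)
    (N : Subgroup G) [hN : N.Normal]
    (huniq : ∀ M : Subgroup G, M.Normal → M ≠ ⊥ → N ≤ M)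
    (hNle : N ≤ piPrimeNorm π res G)
    (M : Subgroup G) (hM : IsCoatom M) (hNM : ¬ N ≤ M) :
    (Subgroup.map M.subtype (res ↥M)).Normal ∧ res ↥M = ⊥ ∧
      F (G ⧸ N) ∧ res G ≤ N := by
  have hMN : Codisjoint M N := hM.not_le_iff_codisjoint.mp hNM
  have := (hres M).1
  have hR : (Subgroup.map M.subtype (res M)).Normal :=
    Subgroup.normal_of_codisjoint_of_le_normalizer hMN (Subgroup.le_normalizer_map_subtype _)
      (hNle.trans (piPrimeNorm_le_normalizer_map_res res hO M))
  have hRbot : res M = ⊥ := by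
    by_contra hne
    refine hNM ((huniq _ hR ?_).trans (Subgroup.map_subtype_le _))
    rwa [Ne, Subgroup.map_eq_bot_iff_of_injective _ M.subtype_injective]
  have hFGN : F (G ⧸ N) :=
    hQ.quotient_of_codisjoint (hQ.of_isResidual_bot (hRbot ▸ hres M)) hMN
  exact ⟨hR, hRbot, hFGN, (hres G).2.2 N hN hFGN⟩

/-- Let `𝔉` be a formation, `G` a finite group with `O_{π'}(G) = 1`
and a unique minimal normal subgroup `N ≤ N_{π'𝔉}(G)`, and let `M` be a maximal
subgroup of `G` with `N ⊄ M`. Then `M^𝔉 ⊴ G`, `M^𝔉 = 1`, `G/N ∈ 𝔉`, and `G^𝔉 ≤ N`. -/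
theorem unique_minimal_norm_consequences (F : GroupClass.{u})
    (hQ : F.QClosed) (hSD : F.SubdirClosed) (π : Set ℕ)
    (res : ∀ (A : Type u) [Group A], Subgroup A)
    (hres : ∀ (A : Type u) [Group A] [Finite A], IsResidual F A (res A))
    (G : Type u) [Group G] [Finite G]
    (hO : Opi {p | p ∉ π} G = ⊥)
    (N : Subgroup G) [hN : N.Normal] (hNbot : N ≠ ⊥)
    (huniq : ∀ M : Subgroup G, M.Normal → M ≠ ⊥ → N ≤ M)
    (hNle : N ≤ piPrimeNorm π res G)
    (M : Subgroup G) (hM : IsCoatom M) (hNM : ¬ N ≤ M) :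
    (Subgroup.map M.subtype (res ↥M)).Normal ∧ res ↥M = ⊥ ∧
      F (G ⧸ N) ∧ res G ≤ N :=
  unique_minimal_norm_consequences_general F hQ π res hres G hO N (hN := hN) huniq hNle M hM hNM
end

section
/- Let ℌ be a quotient-closed Fitting class and 𝔉 a formation. For every finite group G, the terminal term N^∞_{ℌ,𝔉}(G) of the ascending ℌ-𝔉-norm series equals the intersection of all normal subgroups N of G such that N_{ℌ,𝔉}(G/N) = 1. -/
universe u

/-!
The norm is functorial along epimorphisms of finite groups: since `ℌ` and `𝔉` are
quotient-closed, an epimorphism `f` carries `K^𝔉` onto `f(K)^𝔉` and `G_ℌ` into `f(G)_ℌ`, hence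
`N_{ℌ,𝔉}(G)` into `N_{ℌ,𝔉}(f(G))`. So if `N_{ℌ,𝔉}(G/N) = 1`, induction along the norm series puts
every `Nⁱ` inside `N`: the image of `N_{ℌ,𝔉}(G/Nⁱ⁻¹)` in `G/N` is trivial. Conversely, `N^∞` is
itself one of the subgroups being intersected.
-/

section Functoriality

variable {A B : Type u} [Group A] [Group B] {g : A →* B}

lemma IsResidual.map_eq_of_surjective_s18 {F : GroupClass.{u}} (hFq : F.QClosed)
    (hg : Function.Surjective g) {R : Subgroup A} {S : Subgroup B}
    (hR : IsResidual F A R) (hS : IsResidual F B S) : R.map g = S := by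
  obtain ⟨hRn, hFR, hRmin⟩ := hR
  obtain ⟨_, hFS, hSmin⟩ := hS
  apply le_antisymm
  · let φ := (QuotientGroup.mk' S).comp g
    have hφ : Function.Surjective φ := (QuotientGroup.mk'_surjective S).comp hg
    have hker : φ.ker = S.comap g := by
      rw [← MonoidHom.comap_ker, QuotientGroup.ker_mk']
    let e := QuotientGroup.quotientKerEquivOfSurjective φ hφ
    have hRφ : R ≤ φ.ker := hRmin _ φ.normal_ker (hFq _ _ e.symm.toMonoidHom e.symm.surjective hFS)
    exact Subgroup.map_le_iff_le_comap.mpr (hker ▸ hRφ)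
  · have hRg : R ≤ (R.map g).comap g := Subgroup.le_comap_map g R
    have hRgn : (R.map g).Normal := hRn.map g hg
    exact hSmin _ hRgn (hFq _ _ _ (QuotientGroup.map_surjective_of_surjective _ _ g
      (QuotientGroup.mk_surjective.comp hg) hRg) hFR)

lemma IsHRadical.map_le_of_surjective_s18 {Hc : GroupClass.{u}} (hHq : Hc.QClosed)
    (hg : Function.Surjective g) {R : Subgroup A} {S : Subgroup B}
    (hR : IsHRadical Hc A R) (hS : IsHRadical Hc B S) : R.map g ≤ S :=
  hS.2.2 _ (hR.1.map g hg)
    (hHq _ _ (g.subgroupMap R) (g.subgroupMap_surjective R) hR.2.1)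

lemma HFnorm_map_le_of_surjective {Hc F : GroupClass.{u}} (hHq : Hc.QClosed) (hFq : F.QClosed)
    {res rad : ∀ (A : Type u) [Group A], Subgroup A}
    (hres : ∀ (A : Type u) [Group A] [Finite A], IsResidual F A (res A))
    (hrad : ∀ (A : Type u) [Group A] [Finite A], IsHRadical Hc A (rad A))
    [Finite A] [Finite B] (hg : Function.Surjective g) :
    (HFnorm res rad A).map g ≤ HFnorm res rad B := by
  rintro _ ⟨x, hx, rfl⟩
  refine Subgroup.mem_iInf.mpr fun L => ?_
  let K : Subgroup A := L.comap g
  have hresK : ((res K).map K.subtype).map g = (res L).map L.subtype := by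
    rw [Subgroup.map_map, show g.comp K.subtype = L.subtype.comp (g.subgroupComap L) from rfl,
      ← Subgroup.map_map, (hres K).map_eq_of_surjective_s18 hFq
        (g.subgroupComap_surjective_of_surjective L hg) (hres L)]
  have hxK := Subgroup.le_normalizer_map g
    (Subgroup.mem_map_of_mem g (Subgroup.mem_iInf.mp hx K))
  rw [Subgroup.map_sup, hresK] at hxK
  have hsup : (res L).map L.subtype ⊔ (rad A).map g ⊔ rad B = (res L).map L.subtype ⊔ rad B := by
    rw [sup_assoc, sup_eq_right.mpr ((hrad A).map_le_of_surjective_s18 hHq hg (hrad B))]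
  rw [← hsup]
  exact Subgroup.normalizer_le_normalizer_sup_normal (hK := (hrad B).1) hxK

end Functoriality

lemma NormChain.le_of_norm_quotient_eq_bot {n : ∀ (A : Type u) [Group A], Subgroup A}
    (hn : ∀ (A B : Type u) [Group A] [Group B] [Finite A] [Finite B] (g : A →* B),
      Function.Surjective g → (n A).map g ≤ n B)
    {G : Type u} [Group G] [Finite G] {M : Subgroup G} (hM : NormChain n G M)
    {N : Subgroup G} [N.Normal] (hN : n (G ⧸ N) = ⊥) : M ≤ N := by
  induction hM with
  | base => exact bot_le
  | step M hMn _ hMN =>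
    have := hMn
    let q : G ⧸ M →* G ⧸ N := QuotientGroup.map M N (MonoidHom.id G) hMN
    have hq : Function.Surjective q :=
      QuotientGroup.map_surjective_of_surjective _ _ _ QuotientGroup.mk_surjective hMN
    have hker : (n (G ⧸ M)).map q ≤ ⊥ := hN ▸ hn _ _ q hq
    calc (n (G ⧸ M)).comap (QuotientGroup.mk' M)
        ≤ q.ker.comap (QuotientGroup.mk' M) :=
          Subgroup.comap_mono (Subgroup.map_le_iff_le_comap.mp hker)
      _ = N := by
          ext x
          rw [Subgroup.mem_comap, MonoidHom.mem_ker]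
          exact QuotientGroup.eq_one_iff x

theorem norm_infty_eq_iInf_general (Hc F : GroupClass.{u})
    (hHq : Hc.QClosed)
    (hFq : F.QClosed)
    (res rad : ∀ (A : Type u) [Group A], Subgroup A)
    (hres : ∀ (A : Type u) [Group A] [Finite A], IsResidual F A (res A))
    (hrad : ∀ (A : Type u) [Group A] [Finite A], IsHRadical Hc A (rad A))
    (G : Type u) [Group G] [Finite G] (S : Subgroup G)
    (hterm : IsNormTerminal (HFnorm res rad) G S) :
    S = ⨅ (N : Subgroup G), ⨅ (hN : N.Normal),
      ⨅ (_ : (letI := hN; HFnorm res rad (G ⧸ N)) = ⊥), N := by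
  obtain ⟨hchain, hS, hSbot⟩ := hterm
  refine le_antisymm (le_iInf fun N => le_iInf fun hN => le_iInf fun hNbot => ?_)
    (iInf_le_of_le S (iInf_le_of_le hS (iInf_le _ hSbot)))
  exact hchain.le_of_norm_quotient_eq_bot
    (fun _ _ _ _ _ _ _ hg => HFnorm_map_le_of_surjective hHq hFq hres hrad hg) hNbot

/-- For a quotient-closed Fitting class `ℌ` and a formation `𝔉`,
`N^∞_{ℌ,𝔉}(G) = ⋂ {N ⊴ G : N_{ℌ,𝔉}(G/N) = 1}`. -/
theorem norm_infty_eq_iInf (Hc F : GroupClass.{u})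
    (hHn : Hc.NClosed) (hHp : Hc.NProdClosed) (hHq : Hc.QClosed)
    (hFq : F.QClosed) (hFsd : F.SubdirClosed)
    (res rad : ∀ (A : Type u) [Group A], Subgroup A)
    (hres : ∀ (A : Type u) [Group A] [Finite A], IsResidual F A (res A))
    (hrad : ∀ (A : Type u) [Group A] [Finite A], IsHRadical Hc A (rad A))
    (G : Type u) [Group G] [Finite G] (S : Subgroup G)
    (hterm : IsNormTerminal (HFnorm res rad) G S) :
    S = ⨅ (N : Subgroup G), ⨅ (hN : N.Normal),
      ⨅ (_ : (letI := hN; HFnorm res rad (G ⧸ N)) = ⊥), N :=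
  norm_infty_eq_iInf_general Hc F hHq hFq res rad hres hrad G S hterm
end
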